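/- Fix positive integers m and N, and let O₁ and O₂ be finite sets of integer vectors in Fin N → ℤ. Assume the separation condition: for all σ ∈ O₁ and τ ∈ O₂ with σ ≠ τ, there exists an index i with σ i − τ i not divisible by m. Then ∑_{x : Fin N → Fin m} (∑_{σ ∈ O₁} exp(2πi ∑_i σ i · (x i : ℤ) / m)) · conj(∑_{τ ∈ O₂} exp(2πi ∑_i τ i · (x i : ℤ) / m)) = m^N · |O₁ ∩ O₂|. In particular, if O₁ = O₂ = O the sum equals m^N · |O|, and if O₁ and O₂ are disjoint it equals 0. -/
import Mathlib


open Complex Finset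

lemma char_sum (m : ℕ) (hm : 0 < m) (k : ℤ) :
    ∑ x : Fin m, Complex.exp (2 * (Real.pi : ℂ) * Complex.I * k * x / m) =
      if (m : ℤ) ∣ k then (m : ℂ) else 0 := by
  set ζ : ℂ := Complex.exp (2 * (Real.pi : ℂ) * Complex.I * k / m) with hζ
  have hpow : ∀ x : Fin m, Complex.exp (2 * (Real.pi : ℂ) * Complex.I * k * x / m) = ζ ^ (x : ℕ) := by
    intro x
    rw [hζ, ← Complex.exp_nat_mul]
    ring_nf
  rw [Finset.sum_congr rfl (fun x _ => hpow x)]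
  rw [Fin.sum_univ_eq_sum_range (fun n => ζ ^ n)]
  by_cases h : (m : ℤ) ∣ k
  · obtain ⟨c, rfl⟩ := h
    have hζ1 : ζ = 1 := by
      rw [hζ]
      have hm0 : (m : ℂ) ≠ 0 := Nat.cast_ne_zero.mpr hm.ne'
      have : 2 * (Real.pi : ℂ) * Complex.I * ((m : ℤ) * c : ℤ) / ↑m = c * (2 * Real.pi * Complex.I) := by
        push_cast
        field_simp
      rw [this, Complex.exp_int_mul_two_pi_mul_I]
    simp [hζ1]
  · have hζm : ζ ^ m = 1 := by
      rw [hζ, ← Complex.exp_nat_mul]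
      have hm0 : (m : ℂ) ≠ 0 := Nat.cast_ne_zero.mpr hm.ne'
      have : (m : ℂ) * (2 * (Real.pi : ℂ) * Complex.I * k / m) = k * (2 * Real.pi * Complex.I) := by
        field_simp
      rw [this, Complex.exp_int_mul_two_pi_mul_I]
    have hζ1 : ζ ≠ 1 := by
      intro h1
      rw [hζ, Complex.exp_eq_one_iff] at h1
      obtain ⟨n, hn⟩ := h1
      apply h
      refine ⟨n, ?_⟩
      have hm0 : (m : ℂ) ≠ 0 := Nat.cast_ne_zero.mpr hm.ne'
      have hpi : (Real.pi : ℂ) ≠ 0 := by exact_mod_cast Real.pi_ne_zero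
      have hI : Complex.I ≠ 0 := Complex.I_ne_zero
      have h2 : (2 : ℂ) ≠ 0 := two_ne_zero
      have h2πI : (2 * (Real.pi:ℂ) * Complex.I) ≠ 0 := by
        simp [hpi, Complex.I_ne_zero]
      have : (k : ℂ) = m * n := by
        field_simp at hn
        apply mul_left_cancel₀ h2πI
        rw [hn]
      exact_mod_cast this
    rw [if_neg h, geom_sum_eq hζ1, hζm]
    simp

/-- Orthogonality of `E`-orbit functions on the finite group `T_m = (1/m)Q∨/Q∨`:
if the grid separates the two orbits `O₁`, `O₂` of integer vectors, then the
`T_m`-scalar product of the corresponding orbit sums equals `m^N · |O₁ ∩ O₂|`. -/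
theorem finite_orbit_function_orthogonality (m N : ℕ) (hm : 0 < m) (hN : 0 < N)
    (O₁ O₂ : Finset (Fin N → ℤ))
    (hsep : ∀ σ ∈ O₁, ∀ τ ∈ O₂, σ ≠ τ → ∃ i, ¬ ((m : ℤ) ∣ (σ i - τ i))) :
    ∑ x : Fin N → Fin m,
      (∑ σ ∈ O₁, Complex.exp (2 * (Real.pi : ℂ) * Complex.I *
          (∑ i, (σ i : ℂ) * ((x i : ℕ) : ℂ)) / (m : ℂ))) *
        (starRingEnd ℂ) (∑ τ ∈ O₂, Complex.exp (2 * (Real.pi : ℂ) * Complex.I *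
          (∑ i, (τ i : ℂ) * ((x i : ℕ) : ℂ)) / (m : ℂ))) =
      (m : ℂ) ^ N * ((O₁ ∩ O₂).card : ℂ) := by
  have hm0 : (m : ℂ) ≠ 0 := Nat.cast_ne_zero.mpr hm.ne'
  have step1 : ∀ x : Fin N → Fin m,
      (∑ σ ∈ O₁, Complex.exp (2 * (Real.pi : ℂ) * Complex.I *
          (∑ i, (σ i : ℂ) * ((x i : ℕ) : ℂ)) / (m : ℂ))) *
        (starRingEnd ℂ) (∑ τ ∈ O₂, Complex.exp (2 * (Real.pi : ℂ) * Complex.I *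
          (∑ i, (τ i : ℂ) * ((x i : ℕ) : ℂ)) / (m : ℂ))) =
      ∑ σ ∈ O₁, ∑ τ ∈ O₂, ∏ i, Complex.exp
          (2 * (Real.pi : ℂ) * Complex.I * ((σ i - τ i : ℤ) : ℂ) * ((x i : ℕ) : ℂ) / (m : ℂ)) := by
    intro x
    rw [map_sum, Finset.sum_mul_sum]
    refine Finset.sum_congr rfl fun σ _ => Finset.sum_congr rfl fun τ _ => ?_
    rw [← Complex.exp_conj, ← Complex.exp_add, ← Complex.exp_sum]
    congr 1
    simp only [map_div₀, map_mul, map_sum, Complex.conj_I, map_natCast, map_intCast, map_ofNat,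
      Complex.conj_ofReal]
    simp only [Int.cast_sub, sub_mul, mul_sub, sub_div, Finset.sum_sub_distrib,
      Finset.mul_sum, Finset.sum_div, ← Finset.sum_add_distrib]
    rw [← Finset.sum_sub_distrib]
    apply Finset.sum_congr rfl
    intro i _
    ring
  have step2 : ∀ σ ∈ O₁, ∀ τ ∈ O₂,
      (∑ x : Fin N → Fin m, ∏ i, Complex.exp
          (2 * (Real.pi : ℂ) * Complex.I * ((σ i - τ i : ℤ) : ℂ) * ((x i : ℕ) : ℂ) / (m : ℂ))) =
      if σ = τ then (m : ℂ) ^ N else 0 := by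
    intro σ hσ τ hτ
    have hps := Fintype.prod_sum (κ := fun _ : Fin N => Fin m)
      (f := fun i y => Complex.exp
        (2 * (Real.pi : ℂ) * Complex.I * ((σ i - τ i : ℤ) : ℂ) * ((y : ℕ) : ℂ) / (m : ℂ)))
    rw [← hps]
    have hcs : ∀ i : Fin N,
        (∑ y : Fin m, Complex.exp
          (2 * (Real.pi : ℂ) * Complex.I * ((σ i - τ i : ℤ) : ℂ) * ((y : ℕ) : ℂ) / (m : ℂ))) =
        if (m : ℤ) ∣ (σ i - τ i) then (m : ℂ) else 0 := fun i => char_sum m hm (σ i - τ i)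
    rw [Finset.prod_congr rfl (fun i _ => hcs i)]
    by_cases hστ : σ = τ
    · subst hστ
      simp
    · obtain ⟨i, hi⟩ := hsep σ hσ τ hτ hστ
      rw [if_neg hστ]
      exact Finset.prod_eq_zero (Finset.mem_univ i) (if_neg hi)
  calc ∑ x : Fin N → Fin m,
      (∑ σ ∈ O₁, Complex.exp (2 * (Real.pi : ℂ) * Complex.I *
          (∑ i, (σ i : ℂ) * ((x i : ℕ) : ℂ)) / (m : ℂ))) *
        (starRingEnd ℂ) (∑ τ ∈ O₂, Complex.exp (2 * (Real.pi : ℂ) * Complex.I *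
          (∑ i, (τ i : ℂ) * ((x i : ℕ) : ℂ)) / (m : ℂ)))
      = ∑ σ ∈ O₁, ∑ τ ∈ O₂, ∑ x : Fin N → Fin m, ∏ i, Complex.exp
          (2 * (Real.pi : ℂ) * Complex.I * ((σ i - τ i : ℤ) : ℂ) * ((x i : ℕ) : ℂ) / (m : ℂ)) := by
        rw [Finset.sum_congr rfl (fun x _ => step1 x), Finset.sum_comm]
        exact Finset.sum_congr rfl fun σ _ => Finset.sum_comm
    _ = ∑ σ ∈ O₁, ∑ τ ∈ O₂, if σ = τ then (m : ℂ) ^ N else 0 :=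
        Finset.sum_congr rfl fun σ hσ => Finset.sum_congr rfl fun τ hτ => step2 σ hσ τ hτ
    _ = ∑ σ ∈ O₁, if σ ∈ O₂ then (m : ℂ) ^ N else 0 :=
        Finset.sum_congr rfl fun σ _ => Finset.sum_ite_eq O₂ σ (fun _ => (m : ℂ) ^ N)
    _ = (m : ℂ) ^ N * ((O₁ ∩ O₂).card : ℂ) := by
        rw [Finset.sum_ite_mem, Finset.sum_const, nsmul_eq_mul, mul_comm]
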